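/- Let k ≥ 2 and let D be a k-dicritical digraph. Then there is no vertex v of D having exactly one neighbour that is not joined to v by a digon (that is, no vertex v such that all of its neighbours except exactly one are joined to v by digons). -/

import Mathlib

/-!
Basic theory of finite digraphs: a digraph has a finite vertex set and a
finite set of arcs (ordered pairs of distinct vertices).
-/

/-- A finite digraph on a vertex type `V`: a finite vertex set together with a
finite set of arcs, each arc being an ordered pair of distinct vertices. -/
structure Digraph' (V : Type*) where
  verts : Finset V
  arcs : Finset (V × V)
  wf : ∀ a ∈ arcs, a.1 ∈ verts ∧ a.2 ∈ verts ∧ a.1 ≠ a.2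

namespace Digraph'

variable {V : Type*} [DecidableEq V]

/-- The number of vertices of a digraph. -/
def n (D : Digraph' V) : ℕ := D.verts.card

/-- The number of arcs of a digraph. -/
def m (D : Digraph' V) : ℕ := D.arcs.card

/-- The set of consecutive (cyclically) pairs of a list, i.e. the arcs of the
directed cycle running through the list. -/
def cyclicArcs (c : List V) : Finset (V × V) := (c.zip (c.rotate 1)).toFinset

/-- The set of consecutive pairs of a list, i.e. the arcs of the directed path
running through the list. -/
def pathArcs (p : List V) : Finset (V × V) := (p.zip p.tail).toFinset

/-- The symmetric closure of a set of arcs. -/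
def symArcs (s : Finset (V × V)) : Finset (V × V) := s ∪ s.image Prod.swap

/-- The arcs of the bidirected path running through a list (each consecutive
pair is joined by a digon). -/
def pathDigonArcs (p : List V) : Finset (V × V) := symArcs (pathArcs p)

/-- `p` is the list of vertices of a path of odd length (an odd number of edges,
equivalently an even number of vertices) from `a` to `b`. -/
def IsOddBidirPathList (p : List V) (a b : V) : Prop :=
  p.Nodup ∧ Even p.length ∧ p.head? = some a ∧ p.getLast? = some b

/-- The subdigraph induced by `S` contains no directed cycle.  A directed cycle
is given by a nonempty list of at least two distinct vertices, each one having an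
arc towards the (cyclically) next one. -/
def AcyclicOn (D : Digraph' V) (S : Finset V) : Prop :=
  ¬ ∃ c : List V, c.Nodup ∧ 2 ≤ c.length ∧ (∀ v ∈ c, v ∈ S) ∧ cyclicArcs c ⊆ D.arcs

/-- `φ` is a `k`-dicolouring of `D`: every colour class induces an acyclic
subdigraph. -/
def IsDicolouring (D : Digraph' V) (k : ℕ) (φ : V → Fin k) : Prop :=
  ∀ i : Fin k, D.AcyclicOn (D.verts.filter fun v => φ v = i)

/-- `D` admits a `k`-dicolouring. -/
def Dicolourable (D : Digraph' V) (k : ℕ) : Prop :=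
  ∃ φ : V → Fin k, D.IsDicolouring k φ

/-- The dichromatic number of `D`: the least `k` such that `D` is
`k`-dicolourable. -/
noncomputable def dichromatic (D : Digraph' V) : ℕ := sInf {k | D.Dicolourable k}

/-- `H` is a subdigraph of `D`. -/
def IsSubdigraph (H D : Digraph' V) : Prop := H.verts ⊆ D.verts ∧ H.arcs ⊆ D.arcs

/-- `H` is a proper subdigraph of `D`. -/
def IsProperSubdigraph (H D : Digraph' V) : Prop :=
  H.IsSubdigraph D ∧ (H.verts ≠ D.verts ∨ H.arcs ≠ D.arcs)

/-- `D` is `k`-dicritical: its dichromatic number is `k` and every proper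
subdigraph has dichromatic number at most `k - 1`. -/
def Dicritical (k : ℕ) (D : Digraph' V) : Prop :=
  D.dichromatic = k ∧
    ∀ H : Digraph' V, H.IsProperSubdigraph D → H.dichromatic ≤ k - 1

/-- `D` is an oriented graph: it has no digon. -/
def Oriented (D : Digraph' V) : Prop := ∀ a ∈ D.arcs, (a.2, a.1) ∉ D.arcs

/-- There is a digon between `u` and `v` in `D`. -/
def HasDigon (D : Digraph' V) (u v : V) : Prop :=
  (u, v) ∈ D.arcs ∧ (v, u) ∈ D.arcs

/-- `u` and `v` are neighbours: there is at least one arc between them. -/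
def UAdj (D : Digraph' V) (u v : V) : Prop :=
  (u, v) ∈ D.arcs ∨ (v, u) ∈ D.arcs

/-- `M` is a matching of digons of `D` (a matching of the digon graph `B(D)`):
a set of digons of `D`, pairwise sharing no end-vertex. -/
def IsDigonMatching (D : Digraph' V) (M : Finset (V × V)) : Prop :=
  (∀ p ∈ M, D.HasDigon p.1 p.2) ∧
    ∀ p ∈ M, ∀ q ∈ M, p ≠ q → p.1 ≠ q.1 ∧ p.1 ≠ q.2 ∧ p.2 ≠ q.1 ∧ p.2 ≠ q.2

/-- `π(D)`: the maximum size of a matching of the digon graph `B(D)`. -/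
noncomputable def piNum (D : Digraph' V) : ℕ :=
  sSup {k | ∃ M : Finset (V × V), D.IsDigonMatching M ∧ M.card = k}

/-- The potential `ρ(D) = 7 n(D) - 3 m(D) - 2 π(D)`. -/
noncomputable def potential (D : Digraph' V) : ℤ :=
  7 * (D.n : ℤ) - 3 * (D.m : ℤ) - 2 * (D.piNum : ℤ)

/-- The subdigraph of `D` induced by `R`. -/
def induce (D : Digraph' V) (R : Finset V) : Digraph' V where
  verts := D.verts ∩ R
  arcs := D.arcs.filter fun a => a.1 ∈ R ∧ a.2 ∈ R
  wf := by
    intro a ha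
    rw [Finset.mem_filter] at ha
    obtain ⟨h, h1, h2⟩ := ha
    obtain ⟨hv1, hv2, hne⟩ := D.wf a h
    exact ⟨Finset.mem_inter.mpr ⟨hv1, h1⟩, Finset.mem_inter.mpr ⟨hv2, h2⟩, hne⟩

/-- The potential `ρ_D(R)` of a set of vertices `R` in `D`: the potential of the
subdigraph of `D` induced by `R`. -/
noncomputable def potentialOn (D : Digraph' V) (R : Finset V) : ℤ :=
  (D.induce R).potential

/-- The digraph obtained from `D` by deleting the arc `a`. -/
def eraseArc (D : Digraph' V) (a : V × V) : Digraph' V where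
  verts := D.verts
  arcs := D.arcs.erase a
  wf := fun b hb => D.wf b (Finset.mem_of_mem_erase hb)

/-- The digraph obtained from `D` by deleting the vertex `v`. -/
def delVert (D : Digraph' V) (v : V) : Digraph' V where
  verts := D.verts.erase v
  arcs := D.arcs.filter fun a => a.1 ≠ v ∧ a.2 ≠ v
  wf := by
    intro a ha
    rw [Finset.mem_filter] at ha
    obtain ⟨h, h1, h2⟩ := ha
    obtain ⟨hv1, hv2, hne⟩ := D.wf a h
    exact ⟨Finset.mem_erase.mpr ⟨h1, hv1⟩, Finset.mem_erase.mpr ⟨h2, hv2⟩, hne⟩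

/-- The degree of `v` in `D`: the number of arcs incident to `v`. -/
def degree (D : Digraph' V) (v : V) : ℕ :=
  (D.arcs.filter fun a => a.1 = v ∨ a.2 = v).card

/-- `D` is a bidirected odd cycle: obtained from an undirected cycle of odd
length (at least 3) by replacing every edge by a digon. -/
def IsBidirectedOddCycle (D : Digraph' V) : Prop :=
  ∃ c : List V, c.Nodup ∧ 3 ≤ c.length ∧ Odd c.length ∧
    D.verts = c.toFinset ∧ D.arcs = symArcs (cyclicArcs c)

/-- `H` is a bidirected odd cycle with one arc removed. -/
def IsBidirOddCycleMinusArc (H : Digraph' V) : Prop :=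
  ∃ (C : Digraph' V) (e : V × V), C.IsBidirectedOddCycle ∧ e ∈ C.arcs ∧
    H.verts = C.verts ∧ H.arcs = C.arcs.erase e

/-- `D` is an odd 3-wheel with center `c`: a vertex `c` joined to a directed
3-cycle `(x, y, z, x)` by three bidirected paths of odd length, pairwise
disjoint except in `c`. -/
def IsOdd3WheelWithCenter (D : Digraph' V) (c : V) : Prop :=
  ∃ (p₁ p₂ p₃ : List V) (x y z : V),
    IsOddBidirPathList p₁ c x ∧ IsOddBidirPathList p₂ c y ∧ IsOddBidirPathList p₃ c z ∧
    p₁.toFinset ∩ p₂.toFinset = {c} ∧ p₁.toFinset ∩ p₃.toFinset = {c} ∧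
    p₂.toFinset ∩ p₃.toFinset = {c} ∧
    D.verts = p₁.toFinset ∪ p₂.toFinset ∪ p₃.toFinset ∧
    D.arcs = pathDigonArcs p₁ ∪ pathDigonArcs p₂ ∪ pathDigonArcs p₃ ∪
      {(x, y), (y, z), (z, x)}

/-- `D` is an odd 3-wheel. -/
def IsOdd3Wheel (D : Digraph' V) : Prop := ∃ c : V, D.IsOdd3WheelWithCenter c

end Digraph'

/-!
Let `a` be the single arc between `v` and `w`. By criticality, `D - a` has a
`(k-1)`-dicolouring, and it fails on `D` only along a monochromatic directed cycle
through `a`, hence through `v`. The arcs of that cycle entering and leaving `v` cannot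
both be incident to `w`, since `vw` is not a digon; so one of them joins `v` to a
neighbour `u ≠ w`, which by hypothesis forms a digon with `v`. That digon survives in
`D - a` and is monochromatic, a contradiction.
-/

namespace Digraph'

variable {V : Type*} [DecidableEq V]

lemma getElem_mem_cyclicArcs (l : List V) (i : ℕ) (hi : i < l.length) :
    (l[i], (l.rotate 1)[i]'(by rwa [List.length_rotate])) ∈ cyclicArcs l := by
  rw [cyclicArcs, List.mem_toFinset]
  exact List.mem_iff_getElem.mpr ⟨i, by simpa using hi, by simp⟩

lemma mem_of_mem_cyclicArcs {c : List V} {p : V × V} (h : p ∈ cyclicArcs c) :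
    p.1 ∈ c ∧ p.2 ∈ c := by
  rw [cyclicArcs, List.mem_toFinset] at h
  exact ⟨(List.of_mem_zip h).1, List.mem_rotate.1 (List.of_mem_zip h).2⟩

lemma exists_cyclicArcs_of_mem {l : List V} {v : V} (hv : v ∈ l) :
    (∃ x, (x, v) ∈ cyclicArcs l) ∧ ∃ y, (v, y) ∈ cyclicArcs l := by
  constructor
  · obtain ⟨i, hi, hiv⟩ := List.getElem_of_mem (List.mem_rotate.2 hv : v ∈ l.rotate 1)
    rw [List.length_rotate] at hi
    exact ⟨l[i], hiv ▸ getElem_mem_cyclicArcs l i hi⟩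
  · obtain ⟨i, hi, hiv⟩ := List.getElem_of_mem hv
    exact ⟨_, hiv ▸ getElem_mem_cyclicArcs l i hi⟩

lemma Dicolourable.mono {D : Digraph' V} {m k : ℕ} (h : D.Dicolourable m) (hmk : m ≤ k) :
    D.Dicolourable k := by
  obtain ⟨φ, hφ⟩ := h
  refine ⟨fun v => Fin.castLE hmk (φ v), fun i ⟨c, hnd, hlen, hmem, harcs⟩ => ?_⟩
  obtain ⟨z, hz⟩ := List.exists_mem_of_length_pos (by omega : 0 < c.length)
  refine hφ (φ z) ⟨c, hnd, hlen, fun x hx => ?_, harcs⟩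
  have hx' := Finset.mem_filter.1 (hmem x hx)
  have hz' := Finset.mem_filter.1 (hmem z hz)
  exact Finset.mem_filter.2 ⟨hx'.1, Fin.castLE_injective hmk (hx'.2.trans hz'.2.symm)⟩

lemma Dicolourable.dicolourable_dichromatic {D : Digraph' V} {m : ℕ} (h : D.Dicolourable m) :
    D.Dicolourable D.dichromatic :=
  Nat.sInf_mem (s := {m | D.Dicolourable m}) ⟨m, h⟩

lemma Dicolourable.of_dichromatic_le {D : Digraph' V} {m k : ℕ} (h : D.Dicolourable m)
    (hk : D.dichromatic ≤ k) : D.Dicolourable k :=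
  h.dicolourable_dichromatic.mono hk

lemma dichromatic_le {D : Digraph' V} {k : ℕ} (h : D.Dicolourable k) : D.dichromatic ≤ k :=
  Nat.sInf_le h

lemma IsDicolouring.eraseArc {D : Digraph' V} {k : ℕ} {φ : V → Fin k}
    (h : D.IsDicolouring k φ) (a : V × V) : (D.eraseArc a).IsDicolouring k φ :=
  fun i ⟨c, hnd, hlen, hmem, harcs⟩ =>
    h i ⟨c, hnd, hlen, hmem, harcs.trans (Finset.erase_subset a D.arcs)⟩

lemma IsDicolouring.ne_of_hasDigon {D : Digraph' V} {k : ℕ} {φ : V → Fin k}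
    (hφ : D.IsDicolouring k φ) {u v : V} (huv : D.HasDigon u v) : φ u ≠ φ v := by
  intro hcol
  obtain ⟨hu, hv, hne⟩ := D.wf _ huv.1
  refine hφ (φ u) ⟨[u, v], by simpa using hne, by simp, ?_, ?_⟩
  · simp [hu, hv, hcol]
  · simp [cyclicArcs, Finset.insert_subset_iff, huv.1, huv.2]

lemma HasDigon.eraseArc {D : Digraph' V} {u v : V} (h : D.HasDigon u v) {a : V × V}
    (h₁ : (u, v) ≠ a) (h₂ : (v, u) ≠ a) : (D.eraseArc a).HasDigon u v :=
  ⟨Finset.mem_erase.2 ⟨h₁, h.1⟩, Finset.mem_erase.2 ⟨h₂, h.2⟩⟩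

lemma eraseArc_isProperSubdigraph {D : Digraph' V} {a : V × V} (ha : a ∈ D.arcs) :
    (D.eraseArc a).IsProperSubdigraph D :=
  ⟨⟨subset_rfl, Finset.erase_subset a D.arcs⟩, Or.inr (Finset.erase_ne_self.2 ha)⟩

lemma exists_monochromatic_cycle_of_isDicolouring_eraseArc {D : Digraph' V} {k : ℕ}
    {φ : V → Fin k} {a : V × V} (hφ : (D.eraseArc a).IsDicolouring k φ)
    (hφD : ¬ D.IsDicolouring k φ) :
    ∃ c : List V, cyclicArcs c ⊆ D.arcs ∧ a ∈ cyclicArcs c ∧ ∃ i, ∀ z ∈ c, φ z = i := by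
  simp only [IsDicolouring, AcyclicOn, not_forall, not_not] at hφD
  obtain ⟨i, c, hnd, hlen, hmem, harcs⟩ := hφD
  refine ⟨c, harcs, ?_, i, fun z hz => (Finset.mem_filter.1 (hmem z hz)).2⟩
  by_contra hac
  exact hφ i ⟨c, hnd, hlen, hmem, fun b hb =>
    Finset.mem_erase.2 ⟨fun hba => hac (hba ▸ hb), harcs hb⟩⟩

lemma Dicritical.dicolourable {D : Digraph' V} {k : ℕ} (hcrit : D.Dicritical k)
    (hk : k ≠ 0) : D.Dicolourable k := by
  obtain ⟨m, hm⟩ : {m | D.Dicolourable m}.Nonempty := by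
    by_contra hempty
    rw [Set.not_nonempty_iff_eq_empty] at hempty
    exact hk (by rw [← hcrit.1, dichromatic, hempty, Nat.sInf_empty])
  exact hcrit.1 ▸ Dicolourable.dicolourable_dichromatic hm

lemma Dicritical.exists_monochromatic_cycle_through {D : Digraph' V} {k : ℕ}
    (hcrit : D.Dicritical k) (hk : k ≠ 0) {a : V × V} (ha : a ∈ D.arcs) :
    ∃ φ : V → Fin (k - 1), (D.eraseArc a).IsDicolouring (k - 1) φ ∧
      ∃ c : List V, cyclicArcs c ⊆ D.arcs ∧ a ∈ cyclicArcs c ∧ ∃ i, ∀ z ∈ c, φ z = i := by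
  obtain ⟨φ₀, hφ₀⟩ := hcrit.dicolourable hk
  obtain ⟨φ, hφ⟩ := Dicolourable.of_dichromatic_le ⟨φ₀, hφ₀.eraseArc a⟩
    (hcrit.2 _ (eraseArc_isProperSubdigraph ha))
  have hφD : ¬ D.IsDicolouring (k - 1) φ := fun h => by
    have := dichromatic_le ⟨φ, h⟩
    rw [hcrit.1] at this
    omega
  exact ⟨φ, hφ, exists_monochromatic_cycle_of_isDicolouring_eraseArc hφ hφD⟩

end Digraph'

open Digraph' in
/-- If `k ≥ 2` and `D` is a `k`-dicritical digraph, then no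
vertex `v` of `D` has exactly one neighbour not joined to `v` by a digon. -/
theorem no_vertex_with_almost_only_digons {V : Type*} [DecidableEq V]
    (k : ℕ) (hk : 2 ≤ k) (D : Digraph' V) (hcrit : Digraph'.Dicritical k D) :
    ¬ ∃ v w : V, D.UAdj v w ∧ ¬ D.HasDigon v w ∧
      ∀ u : V, D.UAdj v u → u ≠ w → D.HasDigon v u := by
  rintro ⟨v, w, hvw, hnot, hdig⟩
  obtain ⟨a, ha, hav⟩ : ∃ a ∈ D.arcs, a = (v, w) ∨ a = (w, v) := by
    rcases hvw with h | h
    exacts [⟨_, h, Or.inl rfl⟩, ⟨_, h, Or.inr rfl⟩]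
  obtain ⟨φ, hφ, c, hcD, hac, i, hci⟩ := hcrit.exists_monochromatic_cycle_through (by omega) ha
  have hvc : v ∈ c := by
    rcases hav with rfl | rfl
    exacts [(mem_of_mem_cyclicArcs hac).1, (mem_of_mem_cyclicArcs hac).2]
  obtain ⟨u, huc, huw, hvu⟩ : ∃ u ∈ c, u ≠ w ∧ D.UAdj v u := by
    obtain ⟨⟨x, hx⟩, ⟨y, hy⟩⟩ := exists_cyclicArcs_of_mem hvc
    by_cases hxw : x = w
    · subst hxw
      exact ⟨y, (mem_of_mem_cyclicArcs hy).2, fun hyw => hnot ⟨hyw ▸ hcD hy, hcD hx⟩,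
        Or.inl (hcD hy)⟩
    · exact ⟨x, (mem_of_mem_cyclicArcs hx).1, hxw, Or.inr (hcD hx)⟩
  have hvu_digon := hdig u hvu huw
  have huv : v ≠ u := (D.wf _ hvu_digon.1).2.2
  have hdigon : (D.eraseArc a).HasDigon v u := by
    apply hvu_digon.eraseArc <;> rcases hav with rfl | rfl <;> simp [huw, huv.symm]
  exact hφ.ne_of_hasDigon hdigon ((hci v hvc).trans (hci u huc).symm)
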